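/- For every integer p ≥ 3, every N ≥ p and every β > 0, the first moment of 𝒵_N(β) is given exactly by E[𝒵_N(β)] = exp( C(N,p)·( β²a_N²/(2(1+β²a_N²)) − (1/2)·ln(1+β²a_N²) ) ). Consequently, E[𝒵_N(β)] = 1 − (β⁴/4)·N·a_N² + (β⁸/32)·N²·a_N⁴ + O(N^{3−2p}) as N → ∞, i.e. there is a constant K = K(β,p) with |E[𝒵_N(β)] − 1 + (β⁴/4)Na_N² − (β⁸/32)N²a_N⁴| ≤ K·N^{3−2p} for all N. -/

import Mathlib

open MeasureTheory ProbabilityTheory Filter Topology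

noncomputable section

namespace PSpinSK

/-- `I_N`: the p-subsets of `{0,…,N-1}`, encoding strictly increasing p-tuples. -/
def indexSet (N p : ℕ) : Finset (Finset ℕ) := Finset.powersetCard p (Finset.range N)

/-- `σ_A = ∏_{i∈A} σ_i`, where the configuration `σ ∈ {−1,1}^N` is encoded by the set
`s ⊆ {0,…,N-1}` of sites where `σ_i = +1`. -/
def sigmaA (s A : Finset ℕ) : ℝ := ∏ i ∈ A, (if i ∈ s then (1 : ℝ) else -1)

/-- Uniform average `E_σ` over `σ ∈ {−1,1}^N`. -/
def Esigma (N : ℕ) (f : Finset ℕ → ℝ) : ℝ :=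
  (2 ^ N : ℝ)⁻¹ * ∑ s ∈ Finset.powerset (Finset.range N), f s

/-- `a_N = √N · C(N,p)^{-1/2}`. -/
def aN (N p : ℕ) : ℝ := Real.sqrt N / Real.sqrt (N.choose p)

/-- The Hamiltonian `H_N(σ) = −a_N Σ_{A∈I_N} J_A σ_A`. -/
def Ham (N p : ℕ) (J : Finset ℕ → ℝ) (s : Finset ℕ) : ℝ :=
  -(aN N p) * ∑ A ∈ indexSet N p, J A * sigmaA s A

/-- The partition function `Z_N(β)`. -/
def Zfun (N p : ℕ) (β : ℝ) (J : Finset ℕ → ℝ) : ℝ :=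
  Esigma N (fun s => Real.exp (-β * Ham N p J s))

/-- The free energy `F_N(β)`. -/
def freeEnergy (N p : ℕ) (β : ℝ) (J : Finset ℕ → ℝ) : ℝ :=
  (N : ℝ)⁻¹ * Real.log (Zfun N p β J)

/-- `J_N(β) = β²/(2 C(N,p)) Σ_A J_A²`. -/
def Jterm (N p : ℕ) (β : ℝ) (J : Finset ℕ → ℝ) : ℝ :=
  β ^ 2 / (2 * (N.choose p : ℝ)) * ∑ A ∈ indexSet N p, (J A) ^ 2

/-- `𝒵_N(β) = Z_N(β) e^{−N J_N(β)}`. -/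
def calZ (N p : ℕ) (β : ℝ) (J : Finset ℕ → ℝ) : ℝ :=
  Zfun N p β J * Real.exp (-(N : ℝ) * Jterm N p β J)

/-- Truncated partition function `Z_ε^≤`. -/
def Zle (N p : ℕ) (β ε : ℝ) (J : Finset ℕ → ℝ) : ℝ :=
  Esigma N (fun s => Real.exp (-β * Ham N p J s) *
      (if -Ham N p J s ≤ (1 + ε) * β * N then 1 else 0)) *
    Real.exp (-(N : ℝ) * Jterm N p β J)

/-- Truncated partition function `Z_ε^>`. -/
def Zgt (N p : ℕ) (β ε : ℝ) (J : Finset ℕ → ℝ) : ℝ :=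
  Esigma N (fun s => Real.exp (-β * Ham N p J s) *
      (if (1 + ε) * β * N < -Ham N p J s then 1 else 0)) *
    Real.exp (-(N : ℝ) * Jterm N p β J)

def phi (m : ℝ) : ℝ :=
  (1 - m) / 2 * Real.log (1 - m) + (1 + m) / 2 * Real.log (1 + m)

/-- `β_p = (inf_{0<m<1} (1+m^{−p}) φ(m))^{1/2}`. -/
def betaP (p : ℕ) : ℝ :=
  Real.sqrt (sInf ((fun m => (1 + (m ^ p)⁻¹) * phi m) '' Set.Ioo (0 : ℝ) 1))

/-- The family `(J_A)` consists of independent standard Gaussian random variables. -/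
def stdGaussians {Ω : Type*} [MeasurableSpace Ω] (P : Measure Ω)
    (J : Finset ℕ → Ω → ℝ) : Prop :=
  (∀ A, Measurable (J A)) ∧ iIndepFun J P ∧
    ∀ A, P.map (J A) = gaussianReal 0 1

/-- Convergence in distribution (weak convergence of the laws) to the limiting measure `μ`. -/
def TendstoInDistribution {Ω : Type*} [MeasurableSpace Ω] (P : Measure Ω)
    (X : ℕ → Ω → ℝ) (μ : Measure ℝ) : Prop :=
  ∀ f : BoundedContinuousFunction ℝ ℝ,
    Tendsto (fun N => ∫ ω, f (X N ω) ∂P) atTop (𝓝 (∫ x, f x ∂μ))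

/-- Convergence in probability to `0`. -/
def TendstoInProbZero {Ω : Type*} [MeasurableSpace Ω] (P : Measure Ω)
    (X : ℕ → Ω → ℝ) : Prop :=
  ∀ δ : ℝ, 0 < δ → Tendsto (fun N => P {ω | δ ≤ |X N ω|}) atTop (𝓝 0)

/-- `d_{p−2k} = (−1)^k p! / ((p−2k)! 2^k k!)`. -/
def dcoef (p k : ℕ) : ℝ :=
  (-1) ^ k * (p.factorial : ℝ) / (((p - 2 * k).factorial : ℝ) * 2 ^ k * (k.factorial : ℝ))

end PSpinSK

namespace PSpinSK

/-- The overlap `R_N(σ,σ')`. -/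
def Rov (N : ℕ) (s t : Finset ℕ) : ℝ :=
  (N : ℝ)⁻¹ * ∑ i ∈ Finset.range N,
    (if i ∈ s then (1 : ℝ) else -1) * (if i ∈ t then (1 : ℝ) else -1)

/-- Uniform average over pairs `(σ,σ')`. -/
def Esigma2 (N : ℕ) (f : Finset ℕ → Finset ℕ → ℝ) : ℝ :=
  Esigma N (fun s => Esigma N (fun t => f s t))

/-- The large-overlap contribution `B` to the second moment of `Z_ε^≤`. -/
def Bterm (N p : ℕ) (β ε : ℝ) {Ω : Type*} [MeasurableSpace Ω] (P : Measure Ω)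
    (J : Finset ℕ → Ω → ℝ) : ℝ :=
  Esigma2 N (fun s t => ∫ ω,
    (Real.exp (-β * Ham N p (fun A => J A ω) s - β * Ham N p (fun A => J A ω) t) *
        (if -Ham N p (fun A => J A ω) s ≤ (1 + ε) * β * N then 1 else 0) *
        (if -Ham N p (fun A => J A ω) t ≤ (1 + ε) * β * N then 1 else 0) *
        Real.exp (-2 * (N : ℝ) * Jterm N p β (fun A => J A ω)) *
        (if (Real.log N)⁻¹ ≤ |Rov N s t| then 1 else 0)) ∂P)

/-- The small-overlap contribution `A` to the second moment of `Z_ε^≤`. -/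
def Aterm (N p : ℕ) (β ε : ℝ) {Ω : Type*} [MeasurableSpace Ω] (P : Measure Ω)
    (J : Finset ℕ → Ω → ℝ) : ℝ :=
  Esigma2 N (fun s t => ∫ ω,
    (Real.exp (-β * Ham N p (fun A => J A ω) s - β * Ham N p (fun A => J A ω) t) *
        (if -Ham N p (fun A => J A ω) s ≤ (1 + ε) * β * N then 1 else 0) *
        (if -Ham N p (fun A => J A ω) t ≤ (1 + ε) * β * N then 1 else 0) *
        Real.exp (-2 * (N : ℝ) * Jterm N p β (fun A => J A ω)) *
        (if |Rov N s t| < (Real.log N)⁻¹ then 1 else 0)) ∂P)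

/-- `T_N(β) = 1 − β⁴ (E_σ H²)²/8 − β³ E_σ H³/6 + β⁴ E_σ H⁴/24`. -/
def Tterm (N p : ℕ) (β : ℝ) (J : Finset ℕ → ℝ) : ℝ :=
  1 - β ^ 4 * (Esigma N (fun s => (Ham N p J s) ^ 2)) ^ 2 / 8
    - β ^ 3 * Esigma N (fun s => (Ham N p J s) ^ 3) / 6
    + β ^ 4 * Esigma N (fun s => (Ham N p J s) ^ 4) / 24

/-- `ℋ₄`: sum over quadruples of pairwise distinct multi-indices. -/
def H4 (N p : ℕ) (J : Finset ℕ → ℝ) : ℝ :=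
  aN N p ^ 4 / 24 *
    ∑ A ∈ indexSet N p, ∑ B ∈ indexSet N p, ∑ C ∈ indexSet N p, ∑ D ∈ indexSet N p,
      if A ≠ B ∧ A ≠ C ∧ A ≠ D ∧ B ≠ C ∧ B ≠ D ∧ C ≠ D then
        J A * J B * J C * J D *
          Esigma N (fun s => sigmaA s A * sigmaA s B * sigmaA s C * sigmaA s D)
      else 0

/-- The limiting variance `σ(β,p)²` in the `p` even case. -/
def sigmaEven2 (β : ℝ) (p : ℕ) : ℝ :=
  β ^ 6 / 3 *
    ∫ x, (∑ k ∈ Finset.range (p / 2 + 1), dcoef p k * x ^ (p - 2 * k)) ^ 3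
      ∂(gaussianReal 0 1)

/-- The limiting variance `σ(β,p)²` in the `p` odd case. -/
def sigmaOdd2 (β : ℝ) (p : ℕ) : ℝ :=
  β ^ 8 / 12 *
      (∫ x, (∑ k ∈ Finset.range (p / 2 + 1), dcoef p k * x ^ (p - 2 * k)) ^ 4
        ∂(gaussianReal 0 1)) -
    β ^ 8 * (p.factorial : ℝ) ^ 2 / 8

/-- The scaling `α_N(p)`. -/
def alphaN (N p : ℕ) : ℝ :=
  if Even p then (N : ℝ) ^ (3 * (p : ℝ) / 4 - 3 / 2) else (N : ℝ) ^ ((p : ℝ) - 2)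

/-- The limiting mean `μ(β,p)`. -/
def muBP (β : ℝ) (p : ℕ) : ℝ :=
  if Even p then 0 else -(β ^ 4) * (p.factorial : ℝ) / 4

/-- The limiting variance `σ(β,p)²`. -/
def sigmaBP2 (β : ℝ) (p : ℕ) : ℝ :=
  if Even p then sigmaEven2 β p else sigmaOdd2 β p

end PSpinSK

/-!
Completing the square, a standard Gaussian `X` satisfies
`E[e^{tX - t²X²/2}] = (1 + t²)^{-1/2} e^{t² / (2(1 + t²))}`. The normalisation `e^{-N J_N(β)}`
supplies exactly the terms `-t² J_A² / 2` with `t = β a_N σ_A`, and `t² = β² a_N²` does not depend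
on `σ`; by independence of the couplings, `E[𝒵_N(β)] = exp (C(N,p) g(β² a_N²))` with
`g(u) = u / (2(1 + u)) - log (1 + u) / 2`.

For the expansion, `g(u) = -u²/4 + O(u³)` and `e^x = 1 + x + x²/2 + O(|x|³)` for `x ≤ 0`. With
`u = β² N / C(N,p)` and `N^p ≤ p^p p! C(N,p)`, every error term is `O(N³ / C(N,p)²) = O(N^{3-2p})`.
-/

open Real
open scoped NNReal

lemma ProbabilityTheory.iIndepFun.integral_finset_prod_comp {Ω ι : Type*} [MeasurableSpace Ω]
    {μ : Measure Ω} {X : ι → Ω → ℝ} (hX : iIndepFun X μ) (hXm : ∀ i, Measurable (X i))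
    {f : ι → ℝ → ℝ} (hf : ∀ i, Measurable (f i)) (s : Finset ι) :
    ∫ ω, ∏ i ∈ s, f i (X i ω) ∂μ = ∏ i ∈ s, ∫ ω, f i (X i ω) ∂μ := by
  rw [← Finset.prod_coe_sort s]
  simp_rw [← Finset.prod_coe_sort s]
  exact (hX.precomp Subtype.val_injective).integral_fun_prod_comp
    (fun i => (hXm i).aemeasurable) (fun i => (hf i).aestronglyMeasurable)

lemma ProbabilityTheory.integral_exp_mul_sub_mul_sq_gaussianReal (t : ℝ) {b : ℝ} (hb : 0 < b) :
    ∫ x, exp (t * x - (b - 1) / 2 * x ^ 2) ∂gaussianReal 0 1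
      = exp (t ^ 2 / (2 * b) - log b / 2) := by
  set v : ℝ≥0 := (b⁻¹).toNNReal
  have hv_coe : (v : ℝ) = b⁻¹ := Real.coe_toNNReal _ (inv_nonneg.2 hb.le)
  have hv : v ≠ 0 := by simpa [v] using hb
  have hdensity : ∀ x, gaussianPDFReal 0 1 x * exp (t * x - (b - 1) / 2 * x ^ 2)
      = exp (t ^ 2 / (2 * b) - log b / 2) * gaussianPDFReal (t / b) v x := by
    intro x
    have hsqrt : √b = exp (log b / 2) := by rw [← Real.log_sqrt hb.le, exp_log (by positivity)]
    simp only [gaussianPDFReal, hv_coe, NNReal.coe_one, sqrt_mul' _ (inv_nonneg.2 hb.le)]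
    rw [sqrt_inv, hsqrt]
    field_simp
    rw [← exp_add, ← exp_add, ← exp_add]
    congr 1
    field_simp
    ring
  simp_rw [integral_gaussianReal_eq_integral_smul one_ne_zero, smul_eq_mul, hdensity,
    integral_const_mul, integral_gaussianPDFReal_eq_one _ hv, mul_one]

lemma Real.abs_exp_sub_quadratic_le_of_nonpos {x : ℝ} (hx : x ≤ 0) :
    |exp x - (1 + x + x ^ 2 / 2)| ≤ |x| ^ 3 := by
  rcases le_or_gt |x| 1 with hx1 | hx1
  · have h := Real.exp_bound hx1 (n := 3) (by norm_num)
    norm_num [Finset.sum_range_succ, Nat.factorial] at h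
    nlinarith [pow_nonneg (abs_nonneg x) 3]
  · rw [abs_of_nonpos hx] at hx1 ⊢
    have := exp_pos x
    have := exp_le_one_iff.2 hx
    rw [abs_le]
    constructor <;> nlinarith

lemma Real.abs_exp_sub_quadratic_le_of_nonpos' {x : ℝ} (m : ℝ) (hx : x ≤ 0) :
    |exp x - (1 + m + m ^ 2 / 2)| ≤ |x| ^ 3 + |x - m| * (1 + (|x| + |m|) / 2) := by
  have hsq : |x ^ 2 - m ^ 2| ≤ |x - m| * (|x| + |m|) := by
    rw [sq_sub_sq, abs_mul, mul_comm]
    exact mul_le_mul_of_nonneg_left (abs_add_le x m) (abs_nonneg _)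
  calc |exp x - (1 + m + m ^ 2 / 2)|
      = |(exp x - (1 + x + x ^ 2 / 2)) + (x - m) + (x ^ 2 - m ^ 2) / 2| := by ring_nf
    _ ≤ |exp x - (1 + x + x ^ 2 / 2)| + |x - m| + |x ^ 2 - m ^ 2| / 2 := by
      grw [abs_add_le, abs_add_le, abs_div, abs_two]
    _ ≤ |x| ^ 3 + |x - m| * (1 + (|x| + |m|) / 2) := by
      grw [abs_exp_sub_quadratic_le_of_nonpos hx, hsq]
      linarith

lemma Nat.cast_pow_le_mul_choose {N p : ℕ} (hpN : p ≤ N) :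
    (N : ℝ) ^ p ≤ (p ^ p * p.factorial : ℝ) * N.choose p := by
  rcases Nat.eq_zero_or_pos p with rfl | hp
  · simp
  have hlin : (N : ℝ) ≤ p * ((N + 1 - p : ℕ) : ℝ) := by
    rw [Nat.cast_sub (by omega)]
    push_cast
    nlinarith [(Nat.one_le_cast (α := ℝ)).2 hp, (Nat.cast_le (α := ℝ)).2 hpN]
  have hchoose := Nat.pow_le_choose (α := ℝ) p N
  rw [div_le_iff₀ (by positivity)] at hchoose
  calc (N : ℝ) ^ p ≤ (p * ((N + 1 - p : ℕ) : ℝ)) ^ p := by gcongr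
    _ = p ^ p * ((N + 1 - p : ℕ) : ℝ) ^ p := mul_pow _ _ _
    _ ≤ p ^ p * (N.choose p * p.factorial) := by gcongr
    _ = (p ^ p * p.factorial : ℝ) * N.choose p := by ring

lemma Nat.cast_pow_div_choose_le {N p k : ℕ} (hk : k ≤ p) (hpN : p ≤ N) (hN : 1 ≤ N) :
    (N : ℝ) ^ k / N.choose p ≤ p ^ p * p.factorial := by
  have hC : (0 : ℝ) < N.choose p := by exact_mod_cast Nat.choose_pos hpN
  rw [div_le_iff₀ hC]
  exact (pow_le_pow_right₀ (by exact_mod_cast hN) hk).trans (cast_pow_le_mul_choose hpN)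

lemma Nat.cast_pow_three_div_choose_sq_le {N p : ℕ} (hpN : p ≤ N) (hN : 1 ≤ N) :
    (N : ℝ) ^ 3 / N.choose p ^ 2 ≤ (p ^ p * p.factorial) ^ 2 * (N : ℝ) ^ ((3 : ℝ) - 2 * p) := by
  have hN0 : (0 : ℝ) < N := by exact_mod_cast hN
  have hC : (0 : ℝ) < N.choose p := by exact_mod_cast Nat.choose_pos hpN
  have hratio := cast_pow_div_choose_le le_rfl hpN hN
  rw [show (3 : ℝ) - 2 * p = ((3 : ℕ) : ℝ) - ((p * 2 : ℕ) : ℝ) by push_cast; ring,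
    Real.rpow_sub hN0, Real.rpow_natCast, Real.rpow_natCast, pow_mul]
  calc (N : ℝ) ^ 3 / N.choose p ^ 2 = ((N : ℝ) ^ p / N.choose p) ^ 2 * (N ^ 3 / (N ^ p) ^ 2) := by
        field_simp
    _ ≤ ((p : ℝ) ^ p * p.factorial) ^ 2 * (N ^ 3 / (N ^ p) ^ 2) := by gcongr

namespace PSpinSK

noncomputable def firstMomentRate (u : ℝ) : ℝ := u / (2 * (1 + u)) - log (1 + u) / 2

lemma firstMomentRate_nonpos {u : ℝ} (hu : 0 ≤ u) : firstMomentRate u ≤ 0 := by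
  have h := log_le_sub_one_of_pos (x := (1 + u)⁻¹) (by positivity)
  rw [log_inv] at h
  have : u / (2 * (1 + u)) = (1 - (1 + u)⁻¹) / 2 := by field_simp; ring
  rw [firstMomentRate]
  linarith

lemma abs_firstMomentRate_add_sq_div_four_le {u : ℝ} (hu : 0 ≤ u) :
    |firstMomentRate u + u ^ 2 / 4| ≤ 3 * u ^ 3 := by
  rcases le_or_gt u (1 / 2) with hu2 | hu2
  · have hlog := abs_log_sub_add_sum_range_le (x := -u)
      (by rw [abs_neg, abs_of_nonneg hu]; linarith) 2
    simp only [Finset.sum_range_succ, Finset.sum_range_zero, abs_neg, abs_of_nonneg hu,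
      sub_neg_eq_add] at hlog
    have hdiv : u ^ 3 / (1 - u) ≤ 2 * u ^ 3 := by
      rw [div_le_iff₀ (by linarith)]; nlinarith [pow_nonneg hu 3]
    have hrat : 0 ≤ u ^ 3 / (1 + u) ∧ u ^ 3 / (1 + u) ≤ u ^ 3 :=
      ⟨by positivity, div_le_self (by positivity) (by linarith)⟩
    -- `u / (1 + u) = u - u ^ 2 + u ^ 3 / (1 + u)`
    have hid : firstMomentRate u + u ^ 2 / 4
        = (u ^ 3 / (1 + u) - (-u + u ^ 2 / 2 + log (1 + u))) / 2 := by
      rw [firstMomentRate]; field_simp; ring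
    rw [hid, abs_div, abs_two]
    norm_num at hlog
    grw [abs_sub, hlog, abs_of_nonneg hrat.1]
    linarith
  · have hlog : log (1 + u) ≤ u := by linarith [log_le_sub_one_of_pos (x := 1 + u) (by linarith)]
    have hrate : u / (2 * (1 + u)) ≤ u / 2 :=
      div_le_div_of_nonneg_left hu (by norm_num) (by linarith)
    have := firstMomentRate_nonpos hu
    have : 0 ≤ u / (2 * (1 + u)) := by positivity
    rw [abs_le, firstMomentRate] at *
    constructor <;> nlinarith [mul_nonneg (sq_nonneg u) (by linarith : (0:ℝ) ≤ u - 1/2)]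

lemma abs_exp_mul_firstMomentRate_sub_le {U V W c u : ℝ} (hc : 0 ≤ c) (hu : 0 ≤ u)
    (hU : u ≤ U) (hW : c * u ^ 2 ≤ W) (hV : c ^ 2 * u ^ 3 ≤ V) :
    |exp (c * firstMomentRate u) - 1 + c * u ^ 2 / 4 - c ^ 2 * u ^ 4 / 32|
      ≤ ((1 / 4 + 3 * U) ^ 3 * V + 3 * (1 + (1 / 2 + 3 * U) * W / 2)) * (c * u ^ 3) := by
  set x := c * firstMomentRate u
  set m := -(c * u ^ 2 / 4)
  have hm : |m| = c * u ^ 2 / 4 := by rw [abs_neg, abs_of_nonneg (by positivity)]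
  have hxm : |x - m| ≤ 3 * (c * u ^ 3) := by
    rw [show x - m = c * (firstMomentRate u + u ^ 2 / 4) by ring, abs_mul, abs_of_nonneg hc]
    grw [abs_firstMomentRate_add_sq_div_four_le hu]
    linarith
  have hcu3 : c * u ^ 3 ≤ U * (c * u ^ 2) := by
    rw [show c * u ^ 3 = u * (c * u ^ 2) by ring]
    exact mul_le_mul_of_nonneg_right hU (by positivity)
  have hx : |x| ≤ (1 / 4 + 3 * U) * (c * u ^ 2) := by
    calc |x| = |(x - m) + m| := by ring_nf
      _ ≤ |x - m| + |m| := abs_add_le _ _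
      _ ≤ (1 / 4 + 3 * U) * (c * u ^ 2) := by linarith
  have hU0 : 0 ≤ 1 / 4 + 3 * U := by linarith
  have hx3 : |x| ^ 3 ≤ (1 / 4 + 3 * U) ^ 3 * V * (c * u ^ 3) := by
    calc |x| ^ 3 ≤ ((1 / 4 + 3 * U) * (c * u ^ 2)) ^ 3 := by gcongr
      _ = (1 / 4 + 3 * U) ^ 3 * (c ^ 2 * u ^ 3) * (c * u ^ 3) := by ring
      _ ≤ (1 / 4 + 3 * U) ^ 3 * V * (c * u ^ 3) := by gcongr
  have hcross : 1 + (|x| + |m|) / 2 ≤ 1 + (1 / 2 + 3 * U) * W / 2 := by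
    have : |x| + |m| ≤ (1 / 2 + 3 * U) * (c * u ^ 2) := by rw [hm]; linarith
    grw [this, hW]
    linarith
  rw [show exp x - 1 + c * u ^ 2 / 4 - c ^ 2 * u ^ 4 / 32 = exp x - (1 + m + m ^ 2 / 2) by ring]
  grw [Real.abs_exp_sub_quadratic_le_of_nonpos' m (mul_nonpos_of_nonneg_of_nonpos hc
    (firstMomentRate_nonpos hu)), hx3, hxm, hcross]
  linarith

lemma integral_exp_mul_sub_sq_gaussianReal (t : ℝ) :
    ∫ x, exp (t * x - t ^ 2 / 2 * x ^ 2) ∂gaussianReal 0 1 = exp (firstMomentRate (t ^ 2)) := by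
  have h := integral_exp_mul_sub_mul_sq_gaussianReal t (b := 1 + t ^ 2) (by positivity)
  rwa [add_sub_cancel_left] at h

lemma sigmaA_sq (s A : Finset ℕ) : sigmaA s A ^ 2 = 1 := by
  rw [sigmaA, ← Finset.prod_pow]
  exact Finset.prod_eq_one fun i _ => by split_ifs <;> norm_num

lemma aN_sq (N p : ℕ) : aN N p ^ 2 = N / N.choose p := by
  rw [aN, div_pow, sq_sqrt (Nat.cast_nonneg _), sq_sqrt (Nat.cast_nonneg _)]

lemma card_indexSet (N p : ℕ) : (indexSet N p).card = N.choose p := by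
  rw [indexSet, Finset.card_powersetCard, Finset.card_range]

lemma Esigma_const (N : ℕ) (c : ℝ) : Esigma N (fun _ => c) = c := by
  rw [Esigma, Finset.sum_const, Finset.card_powerset, Finset.card_range, nsmul_eq_mul]
  push_cast
  field_simp

lemma integral_Esigma {Ω : Type*} [MeasurableSpace Ω] {μ : Measure Ω} {N : ℕ}
    {F : Finset ℕ → Ω → ℝ} (hF : ∀ s, Integrable (F s) μ) :
    ∫ ω, Esigma N (fun s => F s ω) ∂μ = Esigma N (fun s => ∫ ω, F s ω ∂μ) := by
  simp only [Esigma]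
  rw [integral_const_mul, integral_finsetSum _ fun s _ => hF s]

lemma calZ_eq_Esigma_prod (N p : ℕ) (β : ℝ) (J : Finset ℕ → ℝ) :
    calZ N p β J = Esigma N (fun s => ∏ A ∈ indexSet N p,
      exp (β * aN N p * sigmaA s A * J A - (β * aN N p * sigmaA s A) ^ 2 / 2 * J A ^ 2)) := by
  rw [calZ, Zfun, Esigma, Esigma, mul_assoc, Finset.sum_mul]
  congr 1
  refine Finset.sum_congr rfl fun s _ => ?_
  rw [← exp_add, ← exp_sum, Ham, Jterm]
  congr 1
  have hlin : ∑ A ∈ indexSet N p, β * aN N p * sigmaA s A * J A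
      = β * aN N p * ∑ A ∈ indexSet N p, J A * sigmaA s A := by
    rw [Finset.mul_sum]; exact Finset.sum_congr rfl fun _ _ => by ring
  simp only [mul_pow, sigmaA_sq, mul_one, aN_sq, Finset.sum_sub_distrib, ← Finset.mul_sum, hlin]
  ring

lemma integral_calZ {Ω : Type*} [MeasurableSpace Ω] {P : Measure Ω}
    {J : Finset ℕ → Ω → ℝ} (hJ : stdGaussians P J) (N p : ℕ) (β : ℝ) :
    ∫ ω, calZ N p β (fun A => J A ω) ∂P
      = exp (N.choose p * firstMomentRate (β ^ 2 * aN N p ^ 2)) := by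
  obtain ⟨hmeas, hindep, hlaw⟩ := hJ
  have := hindep.isProbabilityMeasure
  set f : ℝ → ℝ → ℝ := fun t x => exp (t * x - t ^ 2 / 2 * x ^ 2)
  have hf : ∀ t, Measurable (f t) := fun t => by fun_prop
  have hf_le : ∀ t x, ‖f t x‖ ≤ exp (1 / 2) := fun t x => by
    rw [Real.norm_eq_abs, abs_of_pos (exp_pos _), exp_le_exp]
    nlinarith [sq_nonneg (t * x - 1)]
  have hfactor : ∀ s A, ∫ ω, f (β * aN N p * sigmaA s A) (J A ω) ∂P
      = exp (firstMomentRate (β ^ 2 * aN N p ^ 2)) := fun s A => by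
    rw [← integral_map (hmeas A).aemeasurable (hf _).aestronglyMeasurable, hlaw A,
      integral_exp_mul_sub_sq_gaussianReal, mul_pow, mul_pow, sigmaA_sq, mul_one]
  have hint : ∀ s, Integrable
      (fun ω => ∏ A ∈ indexSet N p, f (β * aN N p * sigmaA s A) (J A ω)) P :=
    fun s => Integrable.of_bound (by fun_prop) (exp (1 / 2) ^ (indexSet N p).card)
      (ae_of_all _ fun ω => by
        rw [norm_prod]
        exact (Finset.prod_le_prod (fun _ _ => norm_nonneg _) fun _ _ => hf_le _ _).trans_eq
          (Finset.prod_const _))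
  simp_rw [calZ_eq_Esigma_prod]
  rw [integral_Esigma hint]
  simp_rw [hindep.integral_finset_prod_comp hmeas (fun A => hf _), hfactor,
    Finset.prod_const, card_indexSet, Esigma_const, ← exp_nat_mul]

lemma exists_abs_exp_choose_mul_firstMomentRate_sub_le {p : ℕ} (hp : 3 ≤ p) (β : ℝ) :
    ∃ K : ℝ, ∀ N, p ≤ N →
      |exp (N.choose p * firstMomentRate (β ^ 2 * aN N p ^ 2)) - 1 + β ^ 4 / 4 * N * aN N p ^ 2 -
          β ^ 8 / 32 * N ^ 2 * aN N p ^ 4| ≤ K * (N : ℝ) ^ ((3 : ℝ) - 2 * p) := by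
  set D : ℝ := p ^ p * p.factorial
  refine ⟨((1 / 4 + 3 * (β ^ 2 * D)) ^ 3 * (β ^ 6 * D)
    + 3 * (1 + (1 / 2 + 3 * (β ^ 2 * D)) * (β ^ 4 * D) / 2)) * (β ^ 6 * D ^ 2), fun N hpN => ?_⟩
  have hN : 1 ≤ N := by omega
  have hC : (0 : ℝ) < N.choose p := by exact_mod_cast Nat.choose_pos hpN
  have ha : aN N p ^ 2 = N / N.choose p := aN_sq N p
  have hratio : ∀ k ≤ p, (N : ℝ) ^ k / N.choose p ≤ D :=
    fun k hk => Nat.cast_pow_div_choose_le hk hpN hN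
  have hexp := abs_exp_mul_firstMomentRate_sub_le (c := N.choose p) (u := β ^ 2 * aN N p ^ 2)
    hC.le (by positivity)
    (by grw [ha, ← pow_one (N : ℝ), hratio 1 (by omega)])
    (by grw [ha, show (N.choose p : ℝ) * (β ^ 2 * (N / N.choose p)) ^ 2
      = β ^ 4 * (N ^ 2 / N.choose p) by field_simp, hratio 2 (by omega)])
    (by grw [ha, show (N.choose p : ℝ) ^ 2 * (β ^ 2 * (N / N.choose p)) ^ 3
      = β ^ 6 * (N ^ 3 / N.choose p) by field_simp, hratio 3 hp])
  have h4 : β ^ 4 / 4 * N * aN N p ^ 2 = N.choose p * (β ^ 2 * aN N p ^ 2) ^ 2 / 4 := by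
    rw [ha]; field_simp
  have h8 : β ^ 8 / 32 * N ^ 2 * aN N p ^ 4
      = (N.choose p) ^ 2 * (β ^ 2 * aN N p ^ 2) ^ 4 / 32 := by
    rw [show aN N p ^ 4 = (aN N p ^ 2) ^ 2 by ring, ha]; field_simp
  have h6 : (N.choose p : ℝ) * (β ^ 2 * aN N p ^ 2) ^ 3 = β ^ 6 * (N ^ 3 / N.choose p ^ 2) := by
    rw [ha]; field_simp
  rw [h4, h8]
  grw [hexp, h6, Nat.cast_pow_three_div_choose_sq_le hpN hN]
  exact le_of_eq (by ring)

end PSpinSK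

open PSpinSK in
theorem pspin_first_moment_calZ_general
    {Ω : Type*} [MeasurableSpace Ω] (P : MeasureTheory.Measure Ω)
    (J : Finset ℕ → Ω → ℝ) (hJ : PSpinSK.stdGaussians P J)
    (p : ℕ) (hp : 3 ≤ p) (β : ℝ) :
    (∀ N, p ≤ N →
      (∫ ω, calZ N p β (fun A => J A ω) ∂P) =
        Real.exp ((N.choose p : ℝ) *
          (β ^ 2 * aN N p ^ 2 / (2 * (1 + β ^ 2 * aN N p ^ 2)) -
            Real.log (1 + β ^ 2 * aN N p ^ 2) / 2))) ∧
    ∃ K : ℝ, ∀ N, p ≤ N →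
      |(∫ ω, calZ N p β (fun A => J A ω) ∂P) - 1 + β ^ 4 / 4 * N * aN N p ^ 2 -
          β ^ 8 / 32 * N ^ 2 * aN N p ^ 4| ≤ K * (N : ℝ) ^ ((3 : ℝ) - 2 * p) := by
  obtain ⟨K, hK⟩ := exists_abs_exp_choose_mul_firstMomentRate_sub_le hp β
  exact ⟨fun N _ => integral_calZ hJ N p β,
    K, fun N hpN => by simpa only [integral_calZ hJ] using hK N hpN⟩

open PSpinSK in
/-- exact first moment of `𝒵_N(β)` and its asymptotic expansion. -/
theorem pspin_first_moment_calZ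
    {Ω : Type*} [MeasurableSpace Ω] (P : MeasureTheory.Measure Ω)
    [MeasureTheory.IsProbabilityMeasure P]
    (J : Finset ℕ → Ω → ℝ) (hJ : PSpinSK.stdGaussians P J)
    (p : ℕ) (hp : 3 ≤ p) (β : ℝ) (hβ0 : 0 < β) :
    (∀ N, p ≤ N →
      (∫ ω, calZ N p β (fun A => J A ω) ∂P) =
        Real.exp ((N.choose p : ℝ) *
          (β ^ 2 * aN N p ^ 2 / (2 * (1 + β ^ 2 * aN N p ^ 2)) -
            Real.log (1 + β ^ 2 * aN N p ^ 2) / 2))) ∧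
    ∃ K : ℝ, ∀ N, p ≤ N →
      |(∫ ω, calZ N p β (fun A => J A ω) ∂P) - 1 + β ^ 4 / 4 * N * aN N p ^ 2 -
          β ^ 8 / 32 * N ^ 2 * aN N p ^ 4| ≤ K * (N : ℝ) ^ ((3 : ℝ) - 2 * p) :=
  pspin_first_moment_calZ_general P J hJ p hp β
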